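/- arXiv:2002.09798 — 5 statements merged into one kernel-verified Lean document; each statement's English description precedes it below -/
import Mathlib

section
/- Let S be a set of self-maps and suppose each map in a composition semigroup has degree at least 2 (so deg(f) ≥ 2 for all composites f of elements of S). Let h: points → ℝ≥0 be a function, B_S > 0 a constant, and suppose for every composite f and every point Q we have deg(f)·(h(Q) − B_S) ≤ h(f(Q)) ≤ deg(f)·(h(Q) + B_S), where deg is multiplicative under composition. If h(P) > 3·B_S, then for any sequence γ = (θ_i) of elements of S, the iterates γ_n^+(P) = θ_1∘···∘θ_n(P) are pairwise distinct, i.e., γ_n^+(P) ≠ γ_m^+(P) whenever n ≠ m. -/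
/-!
If `γ_n⁺(P) = γ_m⁺(P)` with `m < n`, the lower height bound for `γ_n⁺` and the upper one for
`γ_m⁺` give `deg γ_n⁺ · (h P − B) ≤ deg γ_m⁺ · (h P + B)`. Since `deg γ_n⁺ ≥ 2 deg γ_m⁺`, this
forces `2 (h P − B) ≤ h P + B`, i.e. `h P ≤ 3 B`.
-/

section OrderedSemiring

variable {R : Type*} [CommSemiring R] [PartialOrder R] [IsStrictOrderedRing R]

lemma prod_map_range_pos {D : ℕ → R} (hD : ∀ i, 0 < D i) (n : ℕ) :
    0 < ((List.range n).map D).prod :=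
  List.prod_pos fun _ hx => by
    obtain ⟨i, -, rfl⟩ := List.mem_map.mp hx
    exact hD i

lemma two_mul_prod_map_range_le {D : ℕ → R} (hD : ∀ i, 2 ≤ D i) {m n : ℕ} (hmn : m < n) :
    2 * ((List.range m).map D).prod ≤ ((List.range n).map D).prod := by
  have hpos : ∀ k, 0 ≤ ((List.range k).map D).prod := fun k =>
    (prod_map_range_pos (fun i => zero_lt_two.trans_le (hD i)) k).le
  induction n, hmn using Nat.le_induction with
  | base =>
    rw [List.range_succ, List.map_append, List.prod_append, mul_comm]
    simpa using mul_le_mul_of_nonneg_left (hD m) (hpos m)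
  | succ n _ ih =>
    rw [List.range_succ, List.map_append, List.prod_append]
    calc 2 * ((List.range m).map D).prod
        ≤ ((List.range n).map D).prod := ih
      _ ≤ ((List.range n).map D).prod * D n := by
        simpa using mul_le_mul_of_nonneg_left (one_le_two.trans (hD n)) (hpos n)
      _ = _ := by simp

end OrderedSemiring

lemma le_three_mul_of_mul_sub_le_mul_add {d e x B : ℝ} (hd : 0 < d) (hde : 2 * d ≤ e)
    (hB : 0 ≤ B) (h : e * (x - B) ≤ d * (x + B)) : x ≤ 3 * B := by
  by_contra! hx
  have hxB : 0 ≤ x - B := by linarith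
  have : d * (2 * (x - B)) ≤ d * (x + B) := by
    nlinarith [mul_le_mul_of_nonneg_right hde hxB]
  linarith [le_of_mul_le_mul_left this hd]

theorem stmt1_general {X : Type*} (θ : ℕ → X → X) (D : ℕ → ℝ)
    (hD : ∀ i, 2 ≤ D i) (h : X → ℝ)
    (BS : ℝ)
    (hht : ∀ (L : List ℕ) (Q : X),
      (L.map D).prod * (h Q - BS) ≤ h ((L.foldr (fun i g => θ i ∘ g) id) Q) ∧
      h ((L.foldr (fun i g => θ i ∘ g) id) Q) ≤ (L.map D).prod * (h Q + BS))
    (P : X) (hP : 3 * BS < h P) :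
    ∀ n m : ℕ, n ≠ m →
      ((List.range n).foldr (fun i g => θ i ∘ g) id) P ≠
      ((List.range m).foldr (fun i g => θ i ∘ g) id) P := by
  -- the empty composite `id` has degree `1`, so its height bounds force `0 ≤ BS`
  have hBS : 0 ≤ BS := by simpa using (hht [] P).1
  suffices key : ∀ m n : ℕ, m < n →
      ((List.range n).foldr (fun i g => θ i ∘ g) id) P ≠
      ((List.range m).foldr (fun i g => θ i ∘ g) id) P by
    intro n m hnm
    rcases hnm.lt_or_gt with hlt | hgt
    exacts [(key n m hlt).symm, key m n hgt]
  intro m n hmn heq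
  have hlower := (hht (List.range n) P).1
  have hupper := (hht (List.range m) P).2
  rw [heq] at hlower
  exact hP.not_ge <| le_three_mul_of_mul_sub_le_mul_add
    (prod_map_range_pos (fun i => zero_lt_two.trans_le (hD i)) m)
    (two_mul_prod_map_range_le hD hmn) hBS (hlower.trans hupper)

/-- If heights transform under composites `f` by
`deg f · (h Q − B_S) ≤ h (f Q) ≤ deg f · (h Q + B_S)` with all degrees at least 2
(multiplicative under composition, encoded via lists of maps), and `h P > 3·B_S`,
then the right iterates `γ_n⁺(P) = θ_0 ∘ ⋯ ∘ θ_{n-1}(P)` are pairwise distinct. -/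
theorem stmt1 {X : Type*} (θ : ℕ → X → X) (D : ℕ → ℝ)
    (hD : ∀ i, 2 ≤ D i) (h : X → ℝ)
    (BS : ℝ) (hBS : 0 < BS)
    (hht : ∀ (L : List ℕ) (Q : X),
      (L.map D).prod * (h Q - BS) ≤ h ((L.foldr (fun i g => θ i ∘ g) id) Q) ∧
      h ((L.foldr (fun i g => θ i ∘ g) id) Q) ≤ (L.map D).prod * (h Q + BS))
    (P : X) (hP : 3 * BS < h P) :
    ∀ n m : ℕ, n ≠ m →
      ((List.range n).foldr (fun i g => θ i ∘ g) id) P ≠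
      ((List.range m).foldr (fun i g => θ i ∘ g) id) P :=
  stmt1_general θ D hD h BS hht P hP
end

section
/- Let S be a free commutative monoid with basis {φ_1,…,φ_s} and weighted length ℓ defined by ℓ(φ_1^{e_1}···φ_s^{e_s}) = ∑ e_i·log(d_i) for integers d_i ≥ 2. Suppose h: S → ℝ is a function and there exist constants 0 < A ≤ B' such that A·exp(ℓ(f)) ≤ h(f) ≤ B'·exp(ℓ(f)) for all f ∈ S. Then lim_{B→∞} #{f ∈ S : h(f) ≤ B}/(log B)^s = 1/(s!·∏_{i=1}^s log(d_i)). -/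
/-!
Write `c i = log (d i)` and let `N(T)` count the lattice points `e ∈ ℕ^s` with
`∑ e i * c i ≤ T`. The comparability of `h` with `exp ∘ ℓ` squeezes `#{h ≤ B}` between
`N(log B - log B')` and `N(log B - log A)`. Slicing along the first coordinate and
comparing `∑ₖ (T - k c₀)^s` with `∫ x^s` (by telescoping `x^(s+1)`) gives, by induction on `s`,
`T^s ≤ s! ∏ c i · N(T) ≤ (T + ∑ c i)^s`, and both ends are `(log B)^s (1 + o(1))`.
-/

open Finset Filter Topology Nat

lemma pow_succ_sub_pow_le {a b : ℝ} (hb : 0 ≤ b) (hba : b ≤ a) (n : ℕ) :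
    a ^ (n + 1) - b ^ (n + 1) ≤ (n + 1) * a ^ n * (a - b) := by
  induction n with
  | zero => simp
  | succ n ih =>
    have hab : 0 ≤ a - b := sub_nonneg.2 hba
    calc a ^ (n + 2) - b ^ (n + 2) = a * (a ^ (n + 1) - b ^ (n + 1)) + b ^ (n + 1) * (a - b) := by
          ring
      _ ≤ a * ((n + 1) * a ^ n * (a - b)) + a ^ (n + 1) * (a - b) := by gcongr; linarith
      _ = ((n + 1 : ℕ) + 1) * a ^ (n + 1) * (a - b) := by push_cast; ring

lemma mul_pow_le_pow_succ_sub_pow {a b : ℝ} (hb : 0 ≤ b) (hba : b ≤ a) (n : ℕ) :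
    (n + 1) * b ^ n * (a - b) ≤ a ^ (n + 1) - b ^ (n + 1) := by
  induction n with
  | zero => simp
  | succ n ih =>
    have ha : 0 ≤ a := hb.trans hba
    have hab : 0 ≤ a - b := sub_nonneg.2 hba
    calc ((n + 1 : ℕ) + 1 : ℝ) * b ^ (n + 1) * (a - b)
        = b * ((n + 1) * b ^ n * (a - b)) + b ^ (n + 1) * (a - b) := by push_cast; ring
      _ ≤ a * (a ^ (n + 1) - b ^ (n + 1)) + b ^ (n + 1) * (a - b) := by gcongr
      _ = a ^ (n + 2) - b ^ (n + 2) := by ring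

lemma Nat.cast_mul_le_of_le_floor_div {c T : ℝ} (hc : 0 < c) (hT : 0 ≤ T) {k : ℕ}
    (hk : k ≤ ⌊T / c⌋₊) : k * c ≤ T :=
  (le_div_iff₀ hc).1 ((Nat.le_floor_iff (div_nonneg hT hc.le)).1 hk)

lemma pow_succ_le_mul_sum_range_floor {c T : ℝ} (hc : 0 < c) (hT : 0 ≤ T) (n : ℕ) :
    T ^ (n + 1) ≤ (n + 1) * c * ∑ k ∈ range (⌊T / c⌋₊ + 1), (T - k * c) ^ n := by
  set m := ⌊T / c⌋₊
  let g : ℕ → ℝ := fun k ↦ max (T - k * c) 0 ^ (n + 1)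
  have hg0 : g 0 = T ^ (n + 1) := by simp [g, hT]
  have hgm : g (m + 1) = 0 := by
    have : T < (m + 1) * c := (div_lt_iff₀ hc).1 (Nat.lt_floor_add_one (T / c))
    simp [g, this.le]
  have hstep : ∀ k ∈ range (m + 1), g k - g (k + 1) ≤ (n + 1) * c * (T - k * c) ^ n := by
    intro k hk
    have hkc : 0 ≤ T - k * c :=
      sub_nonneg.2 (Nat.cast_mul_le_of_le_floor_div hc hT (Nat.lt_succ_iff.1 (mem_range.1 hk)))
    set b := max (T - (k + 1 : ℕ) * c) 0
    have hb : T - (k + 1 : ℕ) * c ≤ b := le_max_left _ _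
    calc g k - g (k + 1) ≤ (n + 1) * (T - k * c) ^ n * (T - k * c - b) := by
          simp only [g, max_eq_left hkc]
          refine pow_succ_sub_pow_le (le_max_right _ _) (max_le ?_ hkc) n
          push_cast; linarith
      _ ≤ (n + 1) * c * (T - k * c) ^ n := by
          rw [mul_right_comm]; gcongr; push_cast at hb; linarith
  calc T ^ (n + 1) = ∑ k ∈ range (m + 1), (g k - g (k + 1)) := by
        rw [sum_range_sub', hg0, hgm, sub_zero]
    _ ≤ ∑ k ∈ range (m + 1), (n + 1) * c * (T - k * c) ^ n := sum_le_sum hstep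
    _ = _ := (mul_sum ..).symm

lemma mul_sum_range_le_add_pow_succ {c U : ℝ} (hc : 0 < c) {m : ℕ} (hm : m * c ≤ U) (n : ℕ) :
    (n + 1) * c * ∑ k ∈ range (m + 1), (U - k * c) ^ n ≤ (U + c) ^ (n + 1) := by
  let f : ℕ → ℝ := fun k ↦ (U + c - k * c) ^ (n + 1)
  have hstep : ∀ k ∈ range (m + 1), (n + 1) * c * (U - k * c) ^ n ≤ f k - f (k + 1) := by
    intro k hk
    have hkc : 0 ≤ U - k * c := by
      have : (k : ℝ) ≤ m := by exact_mod_cast Nat.lt_succ_iff.1 (mem_range.1 hk)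
      nlinarith
    have := mul_pow_le_pow_succ_sub_pow hkc (le_add_of_nonneg_right hc.le) n
    simp only [f]; push_cast
    convert this using 1 <;> ring
  have hf0 : f 0 = (U + c) ^ (n + 1) := by simp [f]
  have hfm : 0 ≤ f (m + 1) := pow_nonneg (by push_cast; linarith) _
  calc (n + 1) * c * ∑ k ∈ range (m + 1), (U - k * c) ^ n
      = ∑ k ∈ range (m + 1), (n + 1) * c * (U - k * c) ^ n := mul_sum ..
    _ ≤ ∑ k ∈ range (m + 1), (f k - f (k + 1)) := sum_le_sum hstep
    _ ≤ (U + c) ^ (n + 1) := by rw [sum_range_sub', hf0]; linarith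

def simplexPoints {s : ℕ} (c : Fin s → ℝ) (T : ℝ) : Set (Fin s → ℕ) :=
  {e | ∑ i, (e i : ℝ) * c i ≤ T}

namespace simplexPoints

variable {s : ℕ}

lemma le_floor_div {c : Fin s → ℝ} (hc : ∀ i, 0 < c i) {T : ℝ} {e : Fin s → ℕ}
    (he : e ∈ simplexPoints c T) (i : Fin s) : e i ≤ ⌊T / c i⌋₊ := by
  refine Nat.le_floor ((le_div_iff₀ (hc i)).2 ((single_le_sum (f := fun j ↦ (e j : ℝ) * c j)
    (fun j _ ↦ ?_) (mem_univ i)).trans he))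
  exact mul_nonneg (Nat.cast_nonneg _) (hc j).le

lemma finite {c : Fin s → ℝ} (hc : ∀ i, 0 < c i) (T : ℝ) : (simplexPoints c T).Finite :=
  (Set.Finite.pi' fun i ↦ Set.finite_Iic ⌊T / c i⌋₊).subset fun _ he i ↦ le_floor_div hc he i

lemma mem_succ_iff {c : Fin (s + 1) → ℝ} {T : ℝ} {e : Fin (s + 1) → ℕ} :
    e ∈ simplexPoints c T ↔ Fin.tail e ∈ simplexPoints (Fin.tail c) (T - e 0 * c 0) := by
  simp only [simplexPoints, Set.mem_ofPred_eq, Fin.sum_univ_succ, Fin.tail, le_sub_iff_add_le']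

noncomputable def equivSigma {c : Fin (s + 1) → ℝ} (hc : ∀ i, 0 < c i) (T : ℝ) :
    simplexPoints c T ≃
      Σ k : Fin (⌊T / c 0⌋₊ + 1), simplexPoints (Fin.tail c) (T - k * c 0) where
  toFun e := ⟨⟨e.1 0, Nat.lt_succ_of_le (le_floor_div hc e.2 0)⟩, Fin.tail e.1, mem_succ_iff.1 e.2⟩
  invFun p := ⟨Fin.cons p.1 p.2.1, mem_succ_iff.2 (by simp [p.2.2])⟩
  left_inv e := by simp
  right_inv p := rfl

lemma card_succ {c : Fin (s + 1) → ℝ} (hc : ∀ i, 0 < c i) (T : ℝ) :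
    Nat.card (simplexPoints c T) =
      ∑ k ∈ range (⌊T / c 0⌋₊ + 1), Nat.card (simplexPoints (Fin.tail c) (T - k * c 0)) := by
  have (k : Fin (⌊T / c 0⌋₊ + 1)) : Finite (simplexPoints (Fin.tail c) (T - k * c 0)) :=
    (finite (fun i ↦ hc i.succ) _).to_subtype
  rw [Nat.card_congr (equivSigma hc T), Nat.card_sigma,
    Fin.sum_univ_eq_sum_range (fun k ↦ Nat.card (simplexPoints (Fin.tail c) (T - k * c 0)))]

lemma pow_le_mul_card : ∀ {s : ℕ} {c : Fin s → ℝ}, (∀ i, 0 < c i) → ∀ {T : ℝ}, 0 ≤ T →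
    T ^ s ≤ s ! * (∏ i, c i) * Nat.card (simplexPoints c T)
  | 0, c, _, T, hT => by simp [simplexPoints, hT]
  | s + 1, c, hc, T, hT => by
    have hc0 := hc 0
    have hc' : ∀ i, 0 < Fin.tail c i := fun i ↦ hc i.succ
    calc T ^ (s + 1) ≤ (s + 1) * c 0 * ∑ k ∈ range (⌊T / c 0⌋₊ + 1), (T - k * c 0) ^ s :=
          pow_succ_le_mul_sum_range_floor (hc 0) hT s
      _ ≤ (s + 1) * c 0 * ∑ k ∈ range (⌊T / c 0⌋₊ + 1),
            s ! * (∏ i, Fin.tail c i) * Nat.card (simplexPoints (Fin.tail c) (T - k * c 0)) := by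
          gcongr with k hk
          exact pow_le_mul_card hc' (sub_nonneg.2 (Nat.cast_mul_le_of_le_floor_div (hc 0) hT
            (Nat.lt_succ_iff.1 (mem_range.1 hk))))
      _ = (s + 1)! * (∏ i, c i) * Nat.card (simplexPoints c T) := by
          rw [card_succ hc, Fin.prod_univ_succ, Nat.factorial_succ, Nat.cast_sum, mul_sum, mul_sum]
          push_cast
          exact sum_congr rfl fun k _ ↦ by simp only [Fin.tail]; ring

lemma card_mul_le_pow : ∀ {s : ℕ} {c : Fin s → ℝ}, (∀ i, 0 < c i) → ∀ {T : ℝ}, 0 ≤ T →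
    s ! * (∏ i, c i) * Nat.card (simplexPoints c T) ≤ (T + ∑ i, c i) ^ s
  | 0, c, _, T, hT => by simp [simplexPoints, hT]
  | s + 1, c, hc, T, hT => by
    have hc0 := hc 0
    have hc' : ∀ i, 0 < Fin.tail c i := fun i ↦ hc i.succ
    set C := ∑ i, Fin.tail c i
    have hC : 0 ≤ C := sum_nonneg fun i _ ↦ (hc' i).le
    have hmT : ⌊T / c 0⌋₊ * c 0 ≤ T := Nat.cast_mul_le_of_le_floor_div (hc 0) hT le_rfl
    calc (s + 1)! * (∏ i, c i) * Nat.card (simplexPoints c T)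
        = (s + 1) * c 0 * ∑ k ∈ range (⌊T / c 0⌋₊ + 1),
            s ! * (∏ i, Fin.tail c i) * Nat.card (simplexPoints (Fin.tail c) (T - k * c 0)) := by
          rw [card_succ hc, Fin.prod_univ_succ, Nat.factorial_succ, Nat.cast_sum, mul_sum, mul_sum]
          push_cast
          exact sum_congr rfl fun k _ ↦ by simp only [Fin.tail]; ring
      _ ≤ (s + 1) * c 0 * ∑ k ∈ range (⌊T / c 0⌋₊ + 1), (T + C - k * c 0) ^ s := by
          gcongr with k hk
          rw [add_sub_right_comm]
          exact card_mul_le_pow hc' (sub_nonneg.2 (Nat.cast_mul_le_of_le_floor_div (hc 0) hT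
            (Nat.lt_succ_iff.1 (mem_range.1 hk))))
      _ ≤ (T + C + c 0) ^ (s + 1) := mul_sum_range_le_add_pow_succ (hc 0) (by linarith) s
      _ = (T + ∑ i, c i) ^ (s + 1) := by rw [Fin.sum_univ_succ]; simp only [C, Fin.tail]; ring

end simplexPoints

lemma tendsto_div_pow_of_add_pow_le_of_le_add_pow {α : Type*} {l : Filter α} {g N : α → ℝ}
    (hg : Tendsto g l atTop) {K a b : ℝ} (hK : 0 < K) (s : ℕ)
    (hlow : ∀ᶠ x in l, (g x + a) ^ s ≤ K * N x) (hup : ∀ᶠ x in l, K * N x ≤ (g x + b) ^ s) :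
    Tendsto (fun x ↦ N x / g x ^ s) l (𝓝 (1 / K)) := by
  have hpos : ∀ᶠ x in l, 0 < g x := hg.eventually_gt_atTop 0
  have hlim (t : ℝ) : Tendsto (fun x ↦ (g x + t) ^ s / K / g x ^ s) l (𝓝 (1 / K)) := by
    have : Tendsto (fun x ↦ (1 + t / g x) ^ s / K) l (𝓝 (1 / K)) := by
      simpa using ((tendsto_const_nhds.div_atTop hg).const_add 1).pow s |>.div_const K
    refine this.congr' (hpos.mono fun x hx ↦ ?_)
    dsimp only
    rw [div_right_comm, ← div_pow, add_div, div_self hx.ne']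
  refine tendsto_of_tendsto_of_tendsto_of_le_of_le' (hlim a) (hlim b) ?_ ?_
  · filter_upwards [hlow, hpos] with x hx hgx
    gcongr
    rwa [div_le_iff₀' hK]
  · filter_upwards [hup, hpos] with x hx hgx
    gcongr
    rwa [le_div_iff₀' hK]

section

variable {α : Type*} {ℓ h : α → ℝ} {A B : ℝ}

lemma setOf_le_subset_setOf_le_log_sub_log (hA : 0 < A) (hB : 0 < B)
    (hlow : ∀ x, A * Real.exp (ℓ x) ≤ h x) : {x | h x ≤ B} ⊆ {x | ℓ x ≤ Real.log B - Real.log A} :=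
  fun x hx ↦ by
    rw [Set.mem_ofPred_eq, ← Real.log_div hB.ne' hA.ne', Real.le_log_iff_exp_le (div_pos hB hA),
      le_div_iff₀' hA]
    exact (hlow x).trans hx

lemma setOf_le_log_sub_log_subset_setOf_le (hA : 0 < A) (hB : 0 < B)
    (hup : ∀ x, h x ≤ A * Real.exp (ℓ x)) : {x | ℓ x ≤ Real.log B - Real.log A} ⊆ {x | h x ≤ B} :=
  fun x hx ↦ by
    rw [Set.mem_ofPred_eq, ← Real.log_div hB.ne' hA.ne', Real.le_log_iff_exp_le (div_pos hB hA),
      le_div_iff₀' hA] at hx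
    exact (hup x).trans hx

end

/-- Counting in a free commutative monoid on `s` generators (modeled as `Fin s → ℕ`)
with weighted length `ℓ f = ∑ f i · log (d i)`, `d i ≥ 2`: if `h` is comparable to
`exp ∘ ℓ`, then `#{f : h f ≤ B} / (log B)^s → 1/(s! ∏ log d_i)`. -/
theorem stmt4 (s : ℕ) (d : Fin s → ℕ) (hd : ∀ i, 2 ≤ d i)
    (h : (Fin s → ℕ) → ℝ) (A B' : ℝ) (hA : 0 < A) (hAB : A ≤ B')
    (hbd : ∀ f : Fin s → ℕ,
      A * Real.exp (∑ i, (f i : ℝ) * Real.log (d i)) ≤ h f ∧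
      h f ≤ B' * Real.exp (∑ i, (f i : ℝ) * Real.log (d i))) :
    Filter.Tendsto
      (fun B : ℝ => (Nat.card {f : Fin s → ℕ | h f ≤ B} : ℝ) / (Real.log B) ^ s)
      Filter.atTop (nhds (1 / (s.factorial * ∏ i, Real.log (d i)))) := by
  set c : Fin s → ℝ := fun i ↦ Real.log (d i)
  have hc : ∀ i, 0 < c i := fun i ↦ Real.log_pos (Nat.one_lt_cast.2 (hd i))
  have hB' : 0 < B' := hA.trans_le hAB
  have hupper {B : ℝ} (hB : 0 < B) : {f | h f ≤ B} ⊆ simplexPoints c (Real.log B - Real.log A) :=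
    setOf_le_subset_setOf_le_log_sub_log hA hB fun f ↦ (hbd f).1
  have hlower {B : ℝ} (hB : 0 < B) : simplexPoints c (Real.log B - Real.log B') ⊆ {f | h f ≤ B} :=
    setOf_le_log_sub_log_subset_setOf_le hB' hB fun f ↦ (hbd f).2
  refine tendsto_div_pow_of_add_pow_le_of_le_add_pow Real.tendsto_log_atTop
    (a := -Real.log B') (b := -Real.log A + ∑ i, c i)
    (mul_pos (by positivity) (prod_pos fun i _ ↦ hc i)) s ?_ ?_
  · filter_upwards [eventually_ge_atTop B'] with B hB
    have hB0 : 0 < B := hB'.trans_le hB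
    calc (Real.log B + -Real.log B') ^ s
        ≤ s ! * (∏ i, c i) * Nat.card (simplexPoints c (Real.log B - Real.log B')) :=
          simplexPoints.pow_le_mul_card hc (sub_nonneg.2 (Real.log_le_log hB' hB))
      _ ≤ s ! * (∏ i, c i) * Nat.card {f | h f ≤ B} := by
          gcongr
          exact Nat.card_mono ((simplexPoints.finite hc _).subset (hupper hB0)) (hlower hB0)
  · filter_upwards [eventually_ge_atTop A] with B hB
    have hB0 : 0 < B := hA.trans_le hB
    calc s ! * (∏ i, c i) * Nat.card {f | h f ≤ B}
        ≤ s ! * (∏ i, c i) * Nat.card (simplexPoints c (Real.log B - Real.log A)) := by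
          gcongr
          exact Nat.card_mono (simplexPoints.finite hc _) (hupper hB0)
      _ ≤ (Real.log B + (-Real.log A + ∑ i, c i)) ^ s := by
          rw [← add_assoc, ← sub_eq_add_neg]
          exact simplexPoints.card_mul_le_pow hc (sub_nonneg.2 (Real.log_le_log hA hB))
end

section
/- Let K be a field of characteristic 0 and let h₁, h₂ ∈ K[x] be nonconstant polynomials with h₂ nonconstant of degree d(h₂) and leading coefficient ℓ(h₂). Then Res(h₁∘h₂, h₁'∘h₂) = ℓ(h₂)^{(d(h₁)² − d(h₁))·d(h₂)} · Res(h₁, h₁')^{d(h₂)}, where Res denotes the resultant and h₁' the derivative of h₁. -/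
open Polynomial

/-- The resultant `Res(f,g) = ℓ(f)^{deg g} · ∏_{f(α)=0} g(α)`, the product taken over the
roots of `f` (with multiplicity) in an algebraic closure. -/
noncomputable def res {K : Type*} [Field K] (f g : K[X]) : AlgebraicClosure K :=
  (algebraMap K (AlgebraicClosure K) f.leadingCoeff) ^ g.natDegree *
    ((f.map (algebraMap K (AlgebraicClosure K))).roots.map
      (fun α => (g.map (algebraMap K (AlgebraicClosure K))).eval α)).prod

/-!
Over an algebraically closed field, `f ∘ g = ℓ(f) · ∏_{f(a)=0} (g - a)`, so the roots of `f ∘ g`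
are the roots of the `g - a`, and there are `deg g` of them above each root `a` of `f`. At each
such root `β` we have `(p ∘ g)(β) = p(a)`, so the product of `p ∘ g` over the roots of `f ∘ g` is
the `deg g`-th power of the product of `p` over the roots of `f`. Comparing leading coefficients
and degrees then gives `Res(f ∘ g, p ∘ g) = ℓ(g)^{deg f · deg p · deg g} · Res(f, p)^{deg g}`,
and the theorem is the case `p = f'`, where `deg f' = deg f - 1` in characteristic zero.
-/

theorem eval_comp_of_mem_roots_sub_C {R : Type*} [CommRing R] [IsDomain R] {g : R[X]} {a β : R}
    (hβ : β ∈ (g - C a).roots) (p : R[X]) : (p.comp g).eval β = p.eval a := by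
  have hgβ : g.eval β = a := by
    simpa [sub_eq_zero] using (mem_roots'.mp hβ).2
  rw [eval_comp, hgβ]

section IsAlgClosed

variable {L : Type*} [Field L] [IsAlgClosed L]

theorem comp_eq_C_leadingCoeff_mul_prod_roots (f g : L[X]) :
    f.comp g = C f.leadingCoeff * (f.roots.map fun a => g - C a).prod := by
  conv_lhs => rw [(IsAlgClosed.splits f).eq_prod_roots]
  simp [mul_comp, multiset_prod_comp, Multiset.map_map, sub_comp]

theorem roots_comp_eq_bind (f : L[X]) {g : L[X]} (hg : 0 < g.natDegree) :
    (f.comp g).roots = f.roots.bind fun a => (g - C a).roots := by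
  rcases eq_or_ne f 0 with rfl | hf
  · simp
  have hg_sub (a : L) : g - C a ≠ 0 :=
    ne_zero_of_natDegree_gt (n := 0) (by rwa [natDegree_sub_C])
  rw [comp_eq_C_leadingCoeff_mul_prod_roots, roots_C_mul _ (leadingCoeff_ne_zero.mpr hf),
    roots_multiset_prod _ (by simp [hg_sub]), Multiset.bind_map]

theorem prod_roots_comp_map_eval_comp (f p : L[X]) {g : L[X]} (hg : 0 < g.natDegree) :
    ((f.comp g).roots.map fun β => (p.comp g).eval β).prod =
      (f.roots.map fun a => p.eval a).prod ^ g.natDegree := by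
  rw [roots_comp_eq_bind f hg, Multiset.map_bind, Multiset.prod_bind, ← Multiset.prod_map_pow]
  refine congrArg Multiset.prod (Multiset.map_congr rfl fun a _ => ?_)
  have hfiber : ((g - C a).roots.map fun β => (p.comp g).eval β) =
      Multiset.replicate g.natDegree (p.eval a) := by
    rw [Multiset.eq_replicate]
    refine ⟨by rw [Multiset.card_map, IsAlgClosed.card_roots_eq_natDegree, natDegree_sub_C], ?_⟩
    intro b hb
    obtain ⟨β, hβ, rfl⟩ := Multiset.mem_map.mp hb
    exact eval_comp_of_mem_roots_sub_C hβ p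
  rw [hfiber, Multiset.prod_replicate]

end IsAlgClosed

theorem res_comp {K : Type*} [Field K] (f p : K[X]) {g : K[X]} (hg : 0 < g.natDegree) :
    res (f.comp g) (p.comp g) =
      algebraMap K (AlgebraicClosure K) g.leadingCoeff ^
          (f.natDegree * p.natDegree * g.natDegree) * res f p ^ g.natDegree := by
  have hg' : 0 < (g.map (algebraMap K (AlgebraicClosure K))).natDegree := by
    rwa [natDegree_map]
  simp only [res, Polynomial.map_comp, prod_roots_comp_map_eval_comp _ _ hg',
    leadingCoeff_comp hg.ne', natDegree_comp, natDegree_map, map_mul, map_pow]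
  ring

theorem stmt5_general {K : Type*} [Field K] [CharZero K]
    (h₁ h₂ : K[X]) (h2c : 0 < h₂.natDegree) :
    res (h₁.comp h₂) (h₁.derivative.comp h₂) =
      (algebraMap K (AlgebraicClosure K) h₂.leadingCoeff) ^
          ((h₁.natDegree ^ 2 - h₁.natDegree) * h₂.natDegree) *
        (res h₁ h₁.derivative) ^ h₂.natDegree := by
  rw [res_comp _ _ h2c, natDegree_derivative, sq, ← Nat.mul_sub_one]

/-- `Res(h₁∘h₂, h₁'∘h₂) = ℓ(h₂)^{(d(h₁)² − d(h₁))·d(h₂)} · Res(h₁, h₁')^{d(h₂)}`. -/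
theorem stmt5 {K : Type*} [Field K] [CharZero K]
    (h₁ h₂ : K[X]) (h1c : 0 < h₁.natDegree) (h2c : 0 < h₂.natDegree) :
    res (h₁.comp h₂) (h₁.derivative.comp h₂) =
      (algebraMap K (AlgebraicClosure K) h₂.leadingCoeff) ^
          ((h₁.natDegree ^ 2 - h₁.natDegree) * h₂.natDegree) *
        (res h₁ h₁.derivative) ^ h₂.natDegree :=
  stmt5_general h₁ h₂ h2c
end

section
/- Let K be a field of characteristic 0 and let S be a set of quadratic polynomials of the form a(x−c)² + b (a ≠ 0, common critical point c ∈ K). Let γ = (θ_1, θ_2, …) be a sequence of elements of S and set γ_n^+ = θ_1∘···∘θ_n, with ℓ_{γ,1} the leading coefficient of γ_1^+ = θ_1. If −ℓ_{γ,1}·γ_1^+(c), ℓ_{γ,1}·γ_2^+(c), …, ℓ_{γ,1}·γ_n^+(c) are all non-squares in K, then γ_n^+ is irreducible over K. -/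
/-!
Induction on `n` with Capelli's lemma: if `γ_{n-1}` is irreducible with root `α`, then
`γ_n = γ_{n-1} ∘ θ_n` is irreducible as soon as `θ_n - α` is irreducible over `K(α)`, i.e. unless
`(α - b_n) / a_n` is a square in `K(α)`. The norm of that element is `± γ_n(c) / ℓ(γ_n)`, whose
square class is that of `± ℓ(θ_1) γ_n(c)` because `ℓ(γ_n)` and `ℓ(θ_1)` differ by a square; the
sign is `-` only for `n = 1`.
-/

open Polynomial IntermediateField

section

variable {K : Type*} [Field K]

theorem IsSquare.of_mul_sq {x y : K} (hy : y ≠ 0) (h : IsSquare (x * y ^ 2)) : IsSquare x := by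
  simpa [mul_assoc, mul_inv_cancel₀ (pow_ne_zero 2 hy)] using h.mul (IsSquare.sq y⁻¹)

namespace Polynomial

theorem irreducible_X_sub_C_sq_sub_C {s : K} (hs : ¬IsSquare s) (t : K) :
    Irreducible ((X - C t) ^ 2 - C s) := by
  have h : Irreducible (X ^ 2 - C s : K[X]) :=
    X_pow_sub_C_irreducible_of_prime Nat.prime_two fun r hr => hs ⟨r, by rw [← hr, sq]⟩
  convert h.map (algEquivAevalXAddC (-t)) using 1
  simp [sub_eq_add_neg]

theorem irreducible_comp_C_mul_X_add_C {f : K[X]} (hf : Irreducible f) {A : K} (hA : A ≠ 0)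
    (B : K) : Irreducible (f.comp (C A * X + C B)) :=
  letI := invertibleOfNonzero hA
  hf.map (algEquivCMulXAddC A B)

theorem Monic.irreducible_comp_X_sub_C_sq {f : K[X]} (hm : f.Monic) (hf : Irreducible f) (c : K)
    (h : ¬IsSquare ((-1) ^ f.natDegree * f.coeff 0)) : Irreducible (f.comp ((X - C c) ^ 2)) := by
  refine irreducible_comp hm ((monic_X_sub_C c).pow 2) hf fun E _ _ x hx => ?_
  have hx_int : IsIntegral K x := minpoly.ne_zero_iff.mp (hx ▸ hm.ne_zero)
  simp only [Polynomial.map_pow, Polynomial.map_sub, map_X, map_C]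
  refine irreducible_X_sub_C_sq_sub_C (fun ⟨w, hw⟩ => h ⟨Algebra.norm K w, ?_⟩) _
  rw [← map_mul, ← hw, ← adjoin.powerBasis_gen hx_int,
    Algebra.PowerBasis.norm_gen_eq_coeff_zero_minpoly]
  simp [minpoly_gen, hx]

theorem _root_.Irreducible.comp_X_sub_C_sq {f : K[X]} (hf : Irreducible f) (c : K)
    (h : ¬IsSquare ((-1) ^ f.natDegree * f.leadingCoeff * f.coeff 0)) :
    Irreducible (f.comp ((X - C c) ^ 2)) := by
  have hℓ : f.leadingCoeff ≠ 0 := leadingCoeff_ne_zero.mpr hf.ne_zero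
  have hu : IsUnit (C f.leadingCoeff⁻¹) := (inv_ne_zero hℓ).isUnit.map C
  rw [← irreducible_mul_isUnit hu, ← C_comp (a := f.leadingCoeff⁻¹) (p := (X - C c) ^ 2),
    ← mul_comp]
  refine (monic_mul_leadingCoeff_inv hf.ne_zero).irreducible_comp_X_sub_C_sq
    ((irreducible_mul_isUnit hu).mpr hf) c fun hsq => h ?_
  rw [natDegree_mul_C (inv_ne_zero hℓ), coeff_mul_C] at hsq
  have hscale : (-1) ^ f.natDegree * (f.coeff 0 * f.leadingCoeff⁻¹) * f.leadingCoeff ^ 2 =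
      (-1) ^ f.natDegree * f.leadingCoeff * f.coeff 0 := by
    field_simp
  exact hscale ▸ hsq.mul (IsSquare.sq _)

theorem natDegree_C_mul_X_sub_C_sq_add_C {A : K} (hA : A ≠ 0) (c B : K) :
    (C A * (X - C c) ^ 2 + C B).natDegree = 2 := by
  compute_degree!

theorem C_mul_X_sub_C_sq_add_C_eq_comp (A c B : K) :
    C A * (X - C c) ^ 2 + C B = (C A * X + C B).comp ((X - C c) ^ 2) := by
  simp

theorem leadingCoeff_C_mul_X_sub_C_sq_add_C {A : K} (hA : A ≠ 0) (c B : K) :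
    (C A * (X - C c) ^ 2 + C B).leadingCoeff = A := by
  rw [C_mul_X_sub_C_sq_add_C_eq_comp, leadingCoeff_comp (by simp), leadingCoeff_linear hA,
    ((monic_X_sub_C c).pow 2).leadingCoeff, one_pow, mul_one]

theorem leadingCoeff_comp_C_mul_X_sub_C_sq_add_C (f : K[X]) {A : K} (hA : A ≠ 0) (c B : K) :
    (f.comp (C A * (X - C c) ^ 2 + C B)).leadingCoeff = f.leadingCoeff * A ^ f.natDegree := by
  rw [leadingCoeff_comp (by simp [natDegree_C_mul_X_sub_C_sq_add_C hA]),
    leadingCoeff_C_mul_X_sub_C_sq_add_C hA]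

theorem _root_.Irreducible.comp_C_mul_X_sub_C_sq_add_C {f : K[X]} (hf : Irreducible f) {A : K}
    (hA : A ≠ 0) (c B : K)
    (h : ¬IsSquare ((-1) ^ f.natDegree * (f.comp (C A * (X - C c) ^ 2 + C B)).leadingCoeff *
      (f.comp (C A * (X - C c) ^ 2 + C B)).eval c)) :
    Irreducible (f.comp (C A * (X - C c) ^ 2 + C B)) := by
  rw [C_mul_X_sub_C_sq_add_C_eq_comp, ← comp_assoc]
  refine (irreducible_comp_C_mul_X_add_C hf hA B).comp_X_sub_C_sq c ?_
  rw [natDegree_comp, natDegree_linear hA, mul_one,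
    leadingCoeff_comp (by rw [natDegree_linear hA]; exact one_ne_zero), leadingCoeff_linear hA,
    coeff_zero_eq_eval_zero, eval_comp]
  rw [leadingCoeff_comp_C_mul_X_sub_C_sq_add_C f hA] at h
  simpa using h

end Polynomial

end

theorem stmt8_general {K : Type*} [Field K]
    (c : K) (a b : ℕ → K) (ha : ∀ i, a i ≠ 0)
    (θ : ℕ → K[X])
    (hθ : ∀ i, θ i = C (a i) * (X - C c) ^ 2 + C (b i))
    (γ : ℕ → K[X]) (hγ0 : γ 0 = X)
    (hγ : ∀ k, γ (k + 1) = (γ k).comp (θ k))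
    (n : ℕ)
    (h1 : ¬ IsSquare (-(a 0) * (γ 1).eval c))
    (hm : ∀ m, 2 ≤ m → m ≤ n → ¬ IsSquare (a 0 * (γ m).eval c)) :
    Irreducible (γ n) := by
  have hγ_deg (k : ℕ) : (γ k).natDegree = 2 ^ k := by
    induction k with
    | zero => simp [hγ0]
    | succ k ih =>
      rw [hγ, hθ, natDegree_comp, natDegree_C_mul_X_sub_C_sq_add_C (ha k), ih, pow_succ]
  have hγ_lc (k : ℕ) : ∃ t ≠ 0, (γ (k + 1)).leadingCoeff = a 0 * t ^ 2 := by
    induction k with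
    | zero =>
      exact ⟨1, one_ne_zero, by simp [hγ, hγ0, hθ, leadingCoeff_C_mul_X_sub_C_sq_add_C (ha 0)]⟩
    | succ k ih =>
      obtain ⟨t, ht, hlc⟩ := ih
      refine ⟨t * a (k + 1) ^ 2 ^ k, mul_ne_zero ht (pow_ne_zero _ (ha _)), ?_⟩
      rw [hγ (k + 1), hθ, leadingCoeff_comp_C_mul_X_sub_C_sq_add_C _ (ha _), hlc, hγ_deg,
        pow_succ 2 k, pow_mul]
      ring
  induction n with
  | zero => simpa [hγ0] using irreducible_X
  | succ k ih =>
    obtain ⟨t, ht, hlc⟩ := hγ_lc k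
    have hstep := (ih fun m hm2 hmk => hm m hm2 (by omega)).comp_C_mul_X_sub_C_sq_add_C
      (ha k) c (b k)
    rw [← hθ, ← hγ, hlc, hγ_deg] at hstep
    refine hstep fun hsq => ?_
    have hregroup : (-1) ^ 2 ^ k * (a 0 * t ^ 2) * (γ (k + 1)).eval c =
        (-1) ^ 2 ^ k * a 0 * (γ (k + 1)).eval c * t ^ 2 := by
      ring
    rw [hregroup] at hsq
    replace hsq := hsq.of_mul_sq ht
    rcases k with _ | k
    · exact h1 (by simpa using hsq)
    · rw [(Nat.even_pow.mpr ⟨even_two, k.succ_ne_zero⟩).neg_one_pow, one_mul] at hsq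
      exact hm (k + 2) le_add_self le_rfl hsq

/-- Stoll-type irreducibility test for right iteration of quadratics with common critical
point `c`: with `γ 0 = X`, `γ (k+1) = γ k ∘ θ k` (so `γ n = θ 0 ∘ ⋯ ∘ θ (n-1)`), if
`−ℓ_{γ,1}·γ_1(c), ℓ_{γ,1}·γ_2(c), …, ℓ_{γ,1}·γ_n(c)` are all non-squares in `K`, then
`γ n` is irreducible over `K`. Here `ℓ_{γ,1} = a 0` is the leading coefficient of `θ 0`. -/
theorem stmt8 {K : Type*} [Field K] [CharZero K]
    (c : K) (a b : ℕ → K) (ha : ∀ i, a i ≠ 0)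
    (θ : ℕ → K[X])
    (hθ : ∀ i, θ i = C (a i) * (X - C c) ^ 2 + C (b i))
    (γ : ℕ → K[X]) (hγ0 : γ 0 = X)
    (hγ : ∀ k, γ (k + 1) = (γ k).comp (θ k))
    (n : ℕ) (hn : 1 ≤ n)
    (h1 : ¬ IsSquare (-(a 0) * (γ 1).eval c))
    (hm : ∀ m, 2 ≤ m → m ≤ n → ¬ IsSquare (a 0 * (γ m).eval c)) :
    Irreducible (γ n) :=
  stmt8_general c a b ha θ hθ γ hγ0 hγ n h1 hm
end

section
/- Let S = {x² + c_1, …, x² + c_s} with distinct integers c_i, and suppose 0 is an escape point for S: there exists r ≥ 0 such that for every composition g of exactly r elements of S, the Weil height h(g(0)) exceeds B_S = C_S/(d_S − 1), where C_S = max_i log|2c_i| (assuming all c_i ≠ 0) and d_S = 2. Then there exist positive constants B_1, B_2 such that for every composition f of n ≥ r elements of S, B_1 ≤ h(f(0))/2^n ≤ B_2. -/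
/-- The logarithmic Weil height of a rational number. -/
noncomputable def weilHeight (q : ℚ) : ℝ := Real.log (max |(q.num : ℝ)| (q.den : ℝ))

/-- The value at `q` of the composition `φ_{i₁} ∘ ⋯ ∘ φ_{iₖ}` of the quadratic maps
`φ_i(x) = x² + c i` along the word `w = [i₁, …, iₖ]`. -/
def applyWord {s : ℕ} (c : Fin s → ℤ) (w : List (Fin s)) (q : ℚ) : ℚ :=
  w.foldr (fun i x => x ^ 2 + (c i : ℚ)) q

/-!
Writing `x = a/b` in lowest terms, `x^d + m = (a^d + m b^d)/b^d` is again in lowest terms, so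
`h(x^d + m)` differs from `d·h(x)` by at most `log(1 + |m|) ≤ log|2m|`. Telescoping along a word
gives `|h(f(q)) - 2^n h(q)| ≤ (2^n - 1) C_S`. A composition of length `n ≥ r` factors as `j ∘ g`
with `g` of length `r`; since only finitely many such `g` exist, `h(g(0))` lies between a minimum
exceeding `C_S` and a maximum, and the telescoping bound for `j` yields both constants.
-/

open Real

theorem Rat.num_add_intCast (q : ℚ) (m : ℤ) : (q + m).num = q.num + m * q.den := by
  have h := Rat.mul_den_eq_num (q + m)
  rw [Rat.add_intCast_den] at h
  have hq : ((q + m).num : ℚ) = q.num + m * q.den := by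
    rw [← h, ← Rat.mul_den_eq_num q]; ring
  exact_mod_cast hq

theorem abs_log_max_pow_add_sub_le (a b m : ℝ) (d : ℕ) (hb : 0 < b) :
    |log (max |a ^ d + m * b ^ d| (b ^ d)) - d * log (max |a| b)| ≤ log (1 + |m|) := by
  set M := max |a| b
  set M' := max |a ^ d + m * b ^ d| (b ^ d)
  have hM : 0 < M := hb.trans_le (le_max_right _ _)
  have hM' : 0 < M' := (pow_pos hb d).trans_le (le_max_right _ _)
  have hm : 0 ≤ |m| := abs_nonneg m
  have hbM : b ^ d ≤ M ^ d := pow_le_pow_left₀ hb.le (le_max_right _ _) d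
  have hbM' : b ^ d ≤ M' := le_max_right _ _
  have hupper : M' ≤ (1 + |m|) * M ^ d := by
    have haM : |a| ^ d ≤ M ^ d := pow_le_pow_left₀ (abs_nonneg a) (le_max_left _ _) d
    refine max_le ?_ (by nlinarith [mul_nonneg hm (pow_nonneg hM.le d)])
    calc |a ^ d + m * b ^ d| ≤ |a| ^ d + |m| * b ^ d := by
          simpa [abs_mul, abs_pow, abs_of_pos hb] using abs_add_le (a ^ d) (m * b ^ d)
      _ ≤ (1 + |m|) * M ^ d := by nlinarith
  have hlower : M ^ d ≤ (1 + |m|) * M' := by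
    rcases max_choice |a| b with h | h <;> rw [show M = _ from h]
    · calc |a| ^ d ≤ |a ^ d + m * b ^ d| + |m| * b ^ d := by
            simpa [abs_mul, abs_pow, abs_of_pos hb, add_comm] using
              abs_sub_le (a ^ d) (a ^ d + m * b ^ d) 0
        _ ≤ (1 + |m|) * M' := by nlinarith [le_max_left |a ^ d + m * b ^ d| (b ^ d)]
    · nlinarith [mul_nonneg hm hM'.le]
  have hlog_mul (x : ℝ) (hx : 0 < x) : log ((1 + |m|) * x) = log (1 + |m|) + log x :=
    log_mul (by positivity) hx.ne'
  have h1 := log_le_log hM' hupper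
  have h2 := log_le_log (by positivity) hlower
  rw [hlog_mul _ (by positivity), log_pow] at h1
  rw [hlog_mul _ hM', log_pow] at h2
  exact abs_sub_le_iff.mpr ⟨by linarith, by linarith⟩

theorem weilHeight_pow_add_intCast_sub_le (x : ℚ) (d : ℕ) (m : ℤ) :
    |weilHeight (x ^ d + m) - d * weilHeight x| ≤ log (1 + |(m : ℝ)|) := by
  have h := abs_log_max_pow_add_sub_le x.num x.den m d (by exact_mod_cast x.pos)
  have hnum : (((x ^ d + m).num : ℤ) : ℝ) = (x.num : ℝ) ^ d + m * (x.den : ℝ) ^ d := by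
    rw [Rat.num_add_intCast, Rat.num_pow, Rat.den_pow]; push_cast; ring
  have hden : (((x ^ d + m).den : ℕ) : ℝ) = (x.den : ℝ) ^ d := by
    rw [Rat.add_intCast_den, Rat.den_pow]; push_cast; ring
  rwa [weilHeight, weilHeight, hnum, hden]

theorem log_one_add_abs_le_log_abs_two_mul (m : ℤ) :
    log (1 + |(m : ℝ)|) ≤ log |2 * (m : ℝ)| := by
  rcases eq_or_ne m 0 with rfl | hm
  · simp
  have hm1 : (1 : ℝ) ≤ |(m : ℝ)| := by exact_mod_cast Int.one_le_abs hm
  refine log_le_log (by positivity) ?_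
  rw [abs_mul, abs_two]
  linarith

section applyWord

variable {s : ℕ} (c : Fin s → ℤ)

theorem applyWord_append (u v : List (Fin s)) (q : ℚ) :
    applyWord c (u ++ v) q = applyWord c u (applyWord c v q) :=
  List.foldr_append

variable {c} {C : ℝ}

theorem abs_weilHeight_applyWord_sub_le (hC : ∀ i, log (1 + |(c i : ℝ)|) ≤ C) (w : List (Fin s)) (q : ℚ) :
    |weilHeight (applyWord c w q) - 2 ^ w.length * weilHeight q| ≤ (2 ^ w.length - 1) * C := by
  induction w with
  | nil => simp [applyWord]
  | cons i w ih =>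
    have hstep := weilHeight_pow_add_intCast_sub_le (applyWord c w q) 2 (c i)
    have hCi := hC i
    change |weilHeight ((applyWord c w q) ^ 2 + c i) - _| ≤ _
    rw [List.length_cons, pow_succ (2 : ℝ)]
    push_cast at hstep
    rw [abs_le] at ih hstep ⊢
    constructor <;> linarith [ih.1, ih.2, hstep.1, hstep.2]

theorem weilHeight_applyWord_bounds (hC : ∀ i, log (1 + |(c i : ℝ)|) ≤ C) (hC0 : 0 ≤ C) (w : List (Fin s)) (q : ℚ) :
    2 ^ w.length * (weilHeight q - C) ≤ weilHeight (applyWord c w q) ∧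
      weilHeight (applyWord c w q) ≤ 2 ^ w.length * (weilHeight q + C) := by
  have h := abs_le.mp (abs_weilHeight_applyWord_sub_le hC w q)
  constructor <;> linarith [h.1, h.2]

end applyWord

theorem stmt10_general (s : ℕ) (hs : 0 < s) (c : Fin s → ℤ)
    (r : ℕ)
    (hesc : ∀ w : List (Fin s), w.length = r →
      (⨆ i : Fin s, Real.log |2 * (c i : ℝ)|) < weilHeight (applyWord c w 0)) :
    ∃ B1 B2 : ℝ, 0 < B1 ∧ 0 < B2 ∧
      ∀ w : List (Fin s), r ≤ w.length →
        B1 ≤ weilHeight (applyWord c w 0) / 2 ^ w.length ∧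
        weilHeight (applyWord c w 0) / 2 ^ w.length ≤ B2 := by
  set C := ⨆ i : Fin s, Real.log |2 * (c i : ℝ)|
  have hC (i : Fin s) : log (1 + |(c i : ℝ)|) ≤ C :=
    (log_one_add_abs_le_log_abs_two_mul (c i)).trans
      (le_ciSup (Set.finite_range fun i => log |2 * (c i : ℝ)|).bddAbove i)
  have hC0 : 0 ≤ C := (log_nonneg (by simp)).trans (hC ⟨0, hs⟩)
  have hwords : {w : List (Fin s) | w.length = r}.Nonempty :=
    ⟨List.replicate r ⟨0, hs⟩, List.length_replicate⟩
  set H := fun w => weilHeight (applyWord c w 0)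
  obtain ⟨wmin, hwmin, hmin⟩ := Set.exists_min_image _ H (List.finite_length_eq _ r) hwords
  obtain ⟨wmax, -, hmax⟩ := Set.exists_max_image _ H (List.finite_length_eq _ r) hwords
  have hgap : C < H wmin := hesc wmin hwmin
  refine ⟨(H wmin - C) / 2 ^ r, (H wmax + C) / 2 ^ r, div_pos (by linarith) (by positivity),
    div_pos (by linarith [hmax wmin hwmin]) (by positivity), fun w hw => ?_⟩
  obtain ⟨u, v, rfl, hv⟩ : ∃ u v : List (Fin s), w = u ++ v ∧ v.length = r :=
    ⟨w.take (w.length - r), w.drop (w.length - r), (List.take_append_drop _ _).symm,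
      by rw [List.length_drop]; omega⟩
  obtain ⟨hlo, hhi⟩ := weilHeight_applyWord_bounds hC hC0 u (applyWord c v 0)
  have hpos : (0 : ℝ) < 2 ^ u.length := by positivity
  rw [applyWord_append, List.length_append, hv, pow_add]
  constructor
  · rw [← mul_div_mul_left _ _ hpos.ne']
    gcongr
    exact le_trans (by gcongr; exact hmin v hv) hlo
  · rw [← mul_div_mul_left (H wmax + C) _ hpos.ne']
    gcongr
    exact hhi.trans (by gcongr; exact hmax v hv)

/-- If `0` is an escape point for `S = {x²+c₁, …, x²+c_s}` (distinct nonzero integers `c_i`),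
i.e. every composition of exactly `r` maps sends `0` to a point of height exceeding
`B_S = C_S/(d_S−1) = max_i log|2c_i|`, then there are constants `0 < B₁, B₂` with
`B₁ ≤ h(f(0))/2^n ≤ B₂` for every composition `f` of `n ≥ r` maps from `S`. -/
theorem stmt10 (s : ℕ) (hs : 0 < s) (c : Fin s → ℤ)
    (hinj : Function.Injective c) (hc0 : ∀ i, c i ≠ 0)
    (r : ℕ)
    (hesc : ∀ w : List (Fin s), w.length = r →
      (⨆ i : Fin s, Real.log |2 * (c i : ℝ)|) < weilHeight (applyWord c w 0)) :
    ∃ B1 B2 : ℝ, 0 < B1 ∧ 0 < B2 ∧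
      ∀ w : List (Fin s), r ≤ w.length →
        B1 ≤ weilHeight (applyWord c w 0) / 2 ^ w.length ∧
        weilHeight (applyWord c w 0) / 2 ^ w.length ≤ B2 :=
  stmt10_general s hs c r hesc
end
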